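/- Assume P and PᵀP are irreducible, there is more than one coarse state, and at least one coarse state contains more than one fine state. Then σ(J(μ)) = (1 − 1/(σ((I−Π(μ))(I−P̂)^{−1}(I−Π(μ))) \ {0})) ∪ {0}; i.e., the nonzero eigenvalues of J(μ) are exactly the numbers 1 − 1/α where α ranges over the nonzero eigenvalues of (I−Π(μ))(I−P̂)^{−1}(I−Π(μ)), and 0 ∈ σ(J(μ)). -/

import Mathlib

open Matrix BigOperators

/-- A matrix is column stochastic: nonnegative entries, each column sums to one. -/
def ColStoch {m : Type*} [Fintype m] (M : Matrix m m ℝ) : Prop :=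
  (∀ i j, 0 ≤ M i j) ∧ ∀ j, ∑ i, M i j = 1

/-- Irreducibility of a matrix via its pattern of nonzero entries:
the associated directed graph is strongly connected. -/
def Irred {m : Type*} [Fintype m] [DecidableEq m] (M : Matrix m m ℝ) : Prop :=
  ∀ i j, ∃ k : ℕ, 0 < k ∧ (M ^ k) i j ≠ 0

/-- Weighted inner product `⟨x,y⟩_w = ∑ i, x i * y i * w i`. -/
def innerW {m : Type*} [Fintype m] (w x y : m → ℝ) : ℝ := ∑ i, x i * y i * w i

/-- Weighted `ℓ²(w)` norm. -/
noncomputable def normW {m : Type*} [Fintype m] (w x : m → ℝ) : ℝ :=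
  Real.sqrt (innerW w x x)

/-- Operator norm of a matrix with respect to the `ℓ²(w)` norm. -/
noncomputable def opNormW {m : Type*} [Fintype m] (w : m → ℝ) (M : Matrix m m ℝ) : ℝ :=
  sInf {c | 0 ≤ c ∧ ∀ x, normW w (M.mulVec x) ≤ c * normW w x}

/-- Aggregation operator for the partition `{f⁻¹(i)}` of `Fin N`. -/
def Agg {N n : ℕ} (f : Fin N → Fin n) : Matrix (Fin n) (Fin N) ℝ :=
  fun i x => if f x = i then 1 else 0

/-- Disaggregation operator for the partition `{f⁻¹(i)}` and weight vector ν. -/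
noncomputable def Disagg {N n : ℕ} (f : Fin N → Fin n) (ν : Fin N → ℝ) :
    Matrix (Fin N) (Fin n) ℝ :=
  fun j i => if f j = i then ν j / (Agg f).mulVec ν i else 0

/-- Coarse approximation `C(ν) = A P D(ν)`. -/
noncomputable def CoarseC {N n : ℕ} (P : Matrix (Fin N) (Fin N) ℝ) (f : Fin N → Fin n)
    (ν : Fin N → ℝ) : Matrix (Fin n) (Fin n) ℝ := Agg f * P * Disagg f ν

/-- `P̂ = P - μ 𝟙ᵀ`. -/
def hatP {N : ℕ} (P : Matrix (Fin N) (Fin N) ℝ) (μ : Fin N → ℝ) :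
    Matrix (Fin N) (Fin N) ℝ := P - vecMulVec μ 1

/-- Coarse projection `S(ν) = D(ν)[A(I-P+μ𝟙ᵀ)D(ν)]⁻¹ A(I-P+μ𝟙ᵀ)`. -/
noncomputable def CoarseS {N n : ℕ} (P : Matrix (Fin N) (Fin N) ℝ) (f : Fin N → Fin n)
    (μ ν : Fin N → ℝ) : Matrix (Fin N) (Fin N) ℝ :=
  Disagg f ν * (Agg f * (1 - P + vecMulVec μ 1) * Disagg f ν)⁻¹ *
    (Agg f * (1 - P + vecMulVec μ 1))

/-- Orthogonal coarse projection `Π(ν) = D(ν) A`. -/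
noncomputable def PiProj {N n : ℕ} (f : Fin N → Fin n) (ν : Fin N → ℝ) :
    Matrix (Fin N) (Fin N) ℝ := Disagg f ν * Agg f

/-- Error propagation operator `J(ν) = P̂ (I - S(ν))`. -/
noncomputable def Jop {N n : ℕ} (P : Matrix (Fin N) (Fin N) ℝ) (f : Fin N → Fin n)
    (μ ν : Fin N → ℝ) : Matrix (Fin N) (Fin N) ℝ := hatP P μ * (1 - CoarseS P f μ ν)

/-- Spectrum (set of complex eigenvalues) of a real matrix. -/
noncomputable def specC {N : ℕ} (M : Matrix (Fin N) (Fin N) ℝ) : Set ℂ :=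
  spectrum ℂ (M.map (Complex.ofReal))

/-- Spectral radius of a real matrix. -/
noncomputable def specRad {N : ℕ} (M : Matrix (Fin N) (Fin N) ℝ) : ℝ :=
  sSup ((fun z : ℂ => ‖z‖) '' specC M)

/-- The `ℓ²(1/μ)`-adjoint `diag(μ) Mᵀ diag(1/μ)`. -/
noncomputable def adjW {N : ℕ} (μ : Fin N → ℝ) (M : Matrix (Fin N) (Fin N) ℝ) :
    Matrix (Fin N) (Fin N) ℝ :=
  Matrix.diagonal μ * Mᵀ * Matrix.diagonal (fun i => (μ i)⁻¹)

/-- The ε-inner product `⟨x,y⟩_ε = ⟨x,(I-Π(μ))y⟩_{1/μ} + ε ⟨x,Π(μ)y⟩_{1/μ}`. -/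
noncomputable def innerEps {N n : ℕ} (f : Fin N → Fin n) (μ : Fin N → ℝ) (ε : ℝ)
    (x y : Fin N → ℝ) : ℝ :=
  innerW (fun i => (μ i)⁻¹) x ((1 - PiProj f μ).mulVec y) +
    ε * innerW (fun i => (μ i)⁻¹) x ((PiProj f μ).mulVec y)

/-- The ε-norm. -/
noncomputable def normEps {N n : ℕ} (f : Fin N → Fin n) (μ : Fin N → ℝ) (ε : ℝ)
    (x : Fin N → ℝ) : ℝ := Real.sqrt (innerEps f μ ε x x)

/-- Operator norm induced by the ε-norm. -/
noncomputable def opNormEps {N n : ℕ} (f : Fin N → Fin n) (μ : Fin N → ℝ) (ε : ℝ)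
    (M : Matrix (Fin N) (Fin N) ℝ) : ℝ :=
  sInf {c | 0 ≤ c ∧ ∀ x, normEps f μ ε (M.mulVec x) ≤ c * normEps f μ ε x}

/-!
`K = I - P̂ = I - P + μ𝟙ᵀ` is invertible: a kernel vector has zero total mass, so it is fixed
by `P`, so by Perron–Frobenius uniqueness for the irreducible `P` it is a multiple of `μ`, of zero
mass. The coarse matrix `A K D` equals `I - C + (Aμ)𝟙ᵀ` for `C = A P D`, which is column
stochastic and irreducible (its graph is the image of that of `P` under the partition map), so it
is invertible for the same reason.

The rest is linear algebra with `S = D (A K D)⁻¹ A K` and `Π = D A`, using only `A D = I` and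
the invertibility of `K` and `A K D`.
If `J x = λ x` with `λ ≠ 0`, then `z = K (I - S) x` satisfies `A z = 0`, which forces
`S x = (1 - λ) Π x` and `z = (1 - λ)(I - Π) x`; hence `Q z = (I - Π) x = (1 - λ)⁻¹ z` for
`Q = (I - Π) K⁻¹ (I - Π)`. Conversely, if `Q z = α z` with `α ≠ 0`, then `Π z = 0`, and
`x = (I - K) K⁻¹ z` satisfies `J x = (1 - α⁻¹) x`. Finally `J D = 0` and `D` is injective,
so `0 ∈ σ(J)`.
-/

namespace Matrix

section CoarseCorrection

variable {m c : Type*} [Fintype m] [Fintype c] [DecidableEq c]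

-- For `K = 1 - hatP P μ`, `A = Agg f`, `D = Disagg f μ` these are `CoarseS P f μ μ` and
-- `Jop P f μ μ`.
noncomputable def coarseCorrection {R : Type*} [CommRing R] (K : Matrix m m R) (A : Matrix c m R)
    (D : Matrix m c R) : Matrix m m R :=
  D * (A * K * D)⁻¹ * (A * K)

noncomputable def errorProp [DecidableEq m] {R : Type*} [CommRing R] (K : Matrix m m R)
    (A : Matrix c m R) (D : Matrix m c R) : Matrix m m R :=
  (1 - K) * (1 - coarseCorrection K A D)

variable {R : Type*} [CommRing R] {K : Matrix m m R} {A : Matrix c m R} {D : Matrix m c R}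

lemma coarseCorrection_mul_of_isUnit (hB : IsUnit (A * K * D)) :
    coarseCorrection K A D * D = D := by
  rw [coarseCorrection, Matrix.mul_assoc (D * _), Matrix.mul_assoc D,
    nonsing_inv_mul _ ((isUnit_iff_isUnit_det _).1 hB), Matrix.mul_one]

lemma mul_coarseCorrection_of_isUnit (hB : IsUnit (A * K * D)) :
    A * K * coarseCorrection K A D = A * K := by
  rw [coarseCorrection, ← Matrix.mul_assoc (A * K) (D * _), ← Matrix.mul_assoc (A * K) D,
    mul_nonsing_inv _ ((isUnit_iff_isUnit_det _).1 hB), Matrix.one_mul]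

lemma mul_coarseCorrection_of_mul_eq_one (hAD : A * D = 1) :
    D * A * coarseCorrection K A D = coarseCorrection K A D := by
  rw [coarseCorrection, ← Matrix.mul_assoc (D * A) (D * _), ← Matrix.mul_assoc (D * A) D,
    Matrix.mul_assoc D A D, hAD, Matrix.mul_one]

lemma map_nonsing_inv {S : Type*} [CommRing S] (φ : R →+* S) {M : Matrix c c R}
    (hM : IsUnit M) : M⁻¹.map φ = (M.map φ)⁻¹ := by
  refine (inv_eq_right_inv ?_).symm
  rw [← Matrix.map_mul, mul_nonsing_inv _ ((isUnit_iff_isUnit_det _).1 hM),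
    Matrix.map_one _ φ.map_zero φ.map_one]

lemma coarseCorrection_map {S : Type*} [CommRing S] (φ : R →+* S) (hB : IsUnit (A * K * D)) :
    (coarseCorrection K A D).map φ = coarseCorrection (K.map φ) (A.map φ) (D.map φ) := by
  simp only [coarseCorrection, Matrix.map_mul, map_nonsing_inv φ hB]

end CoarseCorrection

section ErrorPropSpectrum

variable {𝕜 : Type*} [Field 𝕜] {m c : Type*} [Fintype m] [DecidableEq m] [Fintype c]
  [DecidableEq c] {K : Matrix m m 𝕜} {A : Matrix c m 𝕜} {D : Matrix m c 𝕜}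

omit [DecidableEq c] in
lemma mem_spectrum_iff_exists_mulVec_eq_smul (M : Matrix m m 𝕜) (a : 𝕜) :
    a ∈ spectrum 𝕜 M ↔ ∃ v ≠ 0, M *ᵥ v = a • v := by
  rw [spectrum.mem_iff, isUnit_iff_isUnit_det, isUnit_iff_ne_zero, not_not,
    ← exists_mulVec_eq_zero_iff]
  simp only [Algebra.algebraMap_eq_smul_one, sub_mulVec, smul_mulVec, one_mulVec, sub_eq_zero,
    eq_comm]

lemma inv_one_sub_mem_spectrum_of_mem_spectrum_errorProp (hAD : A * D = 1) (hK : IsUnit K)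
    (hB : IsUnit (A * K * D)) {lam : 𝕜} (hlam : lam ∈ spectrum 𝕜 (errorProp K A D))
    (hlam0 : lam ≠ 0) :
    lam ≠ 1 ∧ (1 - lam)⁻¹ ∈ spectrum 𝕜 ((1 - D * A) * K⁻¹ * (1 - D * A)) := by
  obtain ⟨x, hx0, hx⟩ := (mem_spectrum_iff_exists_mulVec_eq_smul _ _).1 hlam
  set S := coarseCorrection K A D
  set u := x - S *ᵥ x
  set z := K *ᵥ u
  have hu : (1 - K) *ᵥ u = lam • x := by
    rw [← hx, errorProp, ← mulVec_mulVec, sub_mulVec 1 S, one_mulVec]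
  have hz : z = u - lam • x := by rw [← hu, sub_mulVec, one_mulVec, sub_sub_cancel]
  have hKu : K⁻¹ *ᵥ z = u := by
    rw [mulVec_mulVec, nonsing_inv_mul _ ((isUnit_iff_isUnit_det _).1 hK), one_mulVec]
  have hAz : A *ᵥ z = 0 := by
    rw [mulVec_mulVec, mulVec_sub, mulVec_mulVec, mul_coarseCorrection_of_isUnit hB, sub_self]
  have hPiS : (D * A) *ᵥ S *ᵥ x = S *ᵥ x := by
    rw [mulVec_mulVec, mul_coarseCorrection_of_mul_eq_one hAD]
  have hPiz : (D * A) *ᵥ z = 0 := by rw [← mulVec_mulVec, hAz, mulVec_zero]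
  have hSx : S *ᵥ x = (1 - lam) • (D * A) *ᵥ x := by
    rw [hz, mulVec_sub, mulVec_sub, hPiS, mulVec_smul] at hPiz
    rw [sub_smul, one_smul]
    linear_combination (norm := module) -hPiz
  have hzx : z = (1 - lam) • (x - (D * A) *ᵥ x) := by
    rw [hz, show u = x - S *ᵥ x from rfl, hSx]; module
  have hz0 : z ≠ 0 := by
    intro h
    rw [h, mulVec_zero] at hKu
    rw [← hKu, mulVec_zero] at hu
    exact hx0 ((smul_eq_zero.1 hu.symm).resolve_left hlam0)
  have hlam1 : lam ≠ 1 := by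
    rintro rfl
    rw [sub_self, zero_smul] at hzx
    exact hz0 hzx
  refine ⟨hlam1, (mem_spectrum_iff_exists_mulVec_eq_smul _ _).2 ⟨z, hz0, ?_⟩⟩
  have hβ : (1 - lam) ≠ 0 := sub_ne_zero.2 (Ne.symm hlam1)
  have hPi'z : (1 - D * A) *ᵥ z = z := by rw [sub_mulVec, one_mulVec, hPiz, sub_zero]
  have hPi'u : (1 - D * A) *ᵥ u = x - (D * A) *ᵥ x := by
    rw [sub_mulVec, one_mulVec, show u = x - S *ᵥ x from rfl, mulVec_sub, hPiS]; abel
  rw [← mulVec_mulVec, ← mulVec_mulVec, hPi'z, hKu, hPi'u, hzx, smul_smul, inv_mul_cancel₀ hβ,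
    one_smul]

lemma one_sub_inv_mem_spectrum_errorProp (hAD : A * D = 1) (hK : IsUnit K)
    (hB : IsUnit (A * K * D)) {α : 𝕜} (hα : α ∈ spectrum 𝕜 ((1 - D * A) * K⁻¹ * (1 - D * A)))
    (hα0 : α ≠ 0) (hlam0 : 1 - α⁻¹ ≠ 0) : 1 - α⁻¹ ∈ spectrum 𝕜 (errorProp K A D) := by
  obtain ⟨z, hz0, hz⟩ := (mem_spectrum_iff_exists_mulVec_eq_smul _ _).1 hα
  have hPiPi : D * A * (D * A) = D * A := by
    rw [Matrix.mul_assoc, ← Matrix.mul_assoc A, hAD, Matrix.one_mul]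
  have hPiz : (D * A) *ᵥ z = 0 := by
    have h : (D * A) *ᵥ (((1 - D * A) * K⁻¹ * (1 - D * A)) *ᵥ z) = 0 := by
      rw [mulVec_mulVec, ← Matrix.mul_assoc, ← Matrix.mul_assoc, Matrix.mul_sub (D * A) 1,
        Matrix.mul_one, hPiPi, sub_self, Matrix.zero_mul, Matrix.zero_mul, zero_mulVec]
    rwa [hz, mulVec_smul, smul_eq_zero, or_iff_right hα0] at h
  have hAz : A *ᵥ z = 0 := by
    rw [← one_mulVec (A *ᵥ z), ← hAD, mulVec_mulVec, Matrix.mul_assoc, ← mulVec_mulVec, hPiz,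
      mulVec_zero]
  set u := K⁻¹ *ᵥ z
  have hKu : K *ᵥ u = z := by
    rw [mulVec_mulVec, mul_nonsing_inv _ ((isUnit_iff_isUnit_det _).1 hK), one_mulVec]
  have hzu : z = α⁻¹ • (u - (D * A) *ᵥ u) := by
    rw [← mulVec_mulVec, sub_mulVec 1 (D * A) z, one_mulVec, hPiz, sub_zero, ← mulVec_mulVec,
      sub_mulVec, one_mulVec] at hz
    rw [show u - (D * A) *ᵥ u = α • z from hz, smul_smul, inv_mul_cancel₀ hα0, one_smul]
  have hSu : coarseCorrection K A D *ᵥ u = 0 := by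
    rw [coarseCorrection, ← mulVec_mulVec, ← mulVec_mulVec u A K, hKu, hAz, mulVec_zero]
  have hSz : coarseCorrection K A D *ᵥ z = -(α⁻¹ • (D * A) *ᵥ u) := by
    rw [hzu, mulVec_smul, mulVec_sub, hSu, mulVec_mulVec, ← Matrix.mul_assoc,
      coarseCorrection_mul_of_isUnit hB, zero_sub, smul_neg]
  have hx : (1 - coarseCorrection K A D) *ᵥ ((1 - K) *ᵥ u) = (1 - α⁻¹) • u := by
    rw [sub_mulVec 1 K u, one_mulVec, hKu, sub_mulVec, one_mulVec, mulVec_sub, hSu, hSz, hzu]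
    module
  refine (mem_spectrum_iff_exists_mulVec_eq_smul _ _).2 ⟨(1 - K) *ᵥ u, fun h0 => hz0 ?_, ?_⟩
  · rw [h0, mulVec_zero, eq_comm, smul_eq_zero, or_iff_right hlam0] at hx
    rw [← hKu, hx, mulVec_zero]
  · rw [errorProp, ← mulVec_mulVec, hx, mulVec_smul]

lemma zero_mem_spectrum_errorProp [Nonempty c] (hAD : A * D = 1) (hB : IsUnit (A * K * D)) :
    0 ∈ spectrum 𝕜 (errorProp K A D) := by
  have hJD : errorProp K A D * D = 0 := by
    rw [errorProp, Matrix.mul_assoc, Matrix.sub_mul 1 (coarseCorrection K A D), Matrix.one_mul,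
      coarseCorrection_mul_of_isUnit hB, sub_self, Matrix.mul_zero]
  refine (mem_spectrum_iff_exists_mulVec_eq_smul _ _).2 ⟨D *ᵥ 1, fun h => ?_, ?_⟩
  · have h1 : A *ᵥ D *ᵥ (1 : c → 𝕜) = 1 := by rw [mulVec_mulVec, hAD, one_mulVec]
    rw [h, mulVec_zero] at h1
    exact zero_ne_one (congrFun h1 (Classical.arbitrary c))
  · rw [mulVec_mulVec, hJD, zero_mulVec, zero_smul]

theorem spectrum_errorProp [Nonempty c] (hAD : A * D = 1) (hK : IsUnit K)
    (hB : IsUnit (A * K * D)) :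
    spectrum 𝕜 (errorProp K A D) =
      (fun α : 𝕜 => 1 - α⁻¹) '' (spectrum 𝕜 ((1 - D * A) * K⁻¹ * (1 - D * A)) \ {0}) ∪ {0} := by
  ext lam
  rcases eq_or_ne lam 0 with rfl | hlam0
  · simp [zero_mem_spectrum_errorProp hAD hB]
  simp only [Set.mem_union, Set.mem_image, Set.mem_sdiff, Set.mem_singleton_iff, hlam0, or_false]
  constructor
  · intro h
    obtain ⟨hlam1, hmem⟩ := inv_one_sub_mem_spectrum_of_mem_spectrum_errorProp hAD hK hB h hlam0
    exact ⟨(1 - lam)⁻¹, ⟨hmem, inv_ne_zero (sub_ne_zero.2 (Ne.symm hlam1))⟩,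
      by rw [inv_inv, sub_sub_cancel]⟩
  · rintro ⟨α, ⟨hα, hα0⟩, rfl⟩
    exact one_sub_inv_mem_spectrum_errorProp hAD hK hB hα hα0 hlam0

theorem spectrum_map_errorProp {R : Type*} [CommRing R] (φ : R →+* 𝕜) [Nonempty c]
    {K : Matrix m m R} {A : Matrix c m R} {D : Matrix m c R} (hAD : A * D = 1) (hK : IsUnit K)
    (hB : IsUnit (A * K * D)) :
    spectrum 𝕜 ((errorProp K A D).map φ) =
      (fun α : 𝕜 => 1 - α⁻¹) ''
        (spectrum 𝕜 (((1 - D * A) * K⁻¹ * (1 - D * A)).map φ) \ {0}) ∪ {0} := by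
  have hmap1 : (1 : Matrix m m R).map φ = 1 := Matrix.map_one _ φ.map_zero φ.map_one
  rw [errorProp, Matrix.map_mul, Matrix.map_sub _ (map_sub φ), Matrix.map_sub _ (map_sub φ),
    hmap1, coarseCorrection_map φ hB, Matrix.map_mul, Matrix.map_mul, map_nonsing_inv φ hK,
    Matrix.map_sub _ (map_sub φ), hmap1, Matrix.map_mul]
  refine spectrum_errorProp ?_ (hK.map φ.mapMatrix) ?_
  · rw [← Matrix.map_mul, hAD, Matrix.map_one _ φ.map_zero φ.map_one]
  · rw [← Matrix.map_mul, ← Matrix.map_mul]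
    exact hB.map φ.mapMatrix

end ErrorPropSpectrum

section Irreducible

variable {ι : Type*} [Fintype ι] [DecidableEq ι] {M : Matrix ι ι ℝ}

omit [DecidableEq ι] in
lemma mul_apply_nonneg {κ τ : Type*} {X : Matrix κ ι ℝ} {Y : Matrix ι τ ℝ}
    (hX : ∀ a i, 0 ≤ X a i) (hY : ∀ i b, 0 ≤ Y i b) (a : κ) (b : τ) : 0 ≤ (X * Y) a b :=
  Finset.sum_nonneg fun i _ => mul_nonneg (hX a i) (hY i b)

omit [DecidableEq ι] in
lemma mul_apply_pos_of_nonneg {κ τ : Type*} {X : Matrix κ ι ℝ} {Y : Matrix ι τ ℝ}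
    (hX : ∀ a i, 0 ≤ X a i) (hY : ∀ i b, 0 ≤ Y i b) {a : κ} {i : ι} {b : τ} (hXa : 0 < X a i)
    (hYb : 0 < Y i b) : 0 < (X * Y) a b :=
  Finset.sum_pos' (fun j _ => mul_nonneg (hX a j) (hY j b)) ⟨i, Finset.mem_univ i, mul_pos hXa hYb⟩

omit [Fintype ι] [DecidableEq ι] in
lemma IsIrreducible.of_surjective {κ : Type*} {M' : Matrix κ κ ℝ} (hM : M.IsIrreducible)
    (hM' : ∀ a b, 0 ≤ M' a b) {g : ι → κ} (hg : Function.Surjective g)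
    (hpos : ∀ i j, 0 < M i j → 0 < M' (g i) (g j)) : M'.IsIrreducible := by
  refine ⟨hM', fun a b => ?_⟩
  obtain ⟨i, rfl⟩ := hg a
  obtain ⟨j, rfl⟩ := hg b
  let := toQuiver M
  let := toQuiver M'
  have hmap {j} (p : Quiver.Path i j) : ∃ q : Quiver.Path (g i) (g j), q.length = p.length := by
    induction p with
    | nil => exact ⟨.nil, rfl⟩
    | cons p e ih =>
      obtain ⟨q, hq⟩ := ih
      exact ⟨q.cons ⟨hpos _ _ e.down⟩, by simp [hq]⟩
  obtain ⟨p, hp⟩ := hM.connected i j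
  obtain ⟨q, hq⟩ := hmap p
  exact ⟨q, hq ▸ hp⟩

lemma isIrreducible_of_irred (hM : ∀ i j, 0 ≤ M i j) (h : Irred M) : M.IsIrreducible :=
  (isIrreducible_iff_exists_pow_pos hM).2 fun i j =>
    let ⟨k, hk, hne⟩ := h i j
    ⟨k, hk, (pow_apply_nonneg hM k i j).lt_of_ne' hne⟩

end Irreducible

section PerronFrobenius

variable {ι : Type*} [Fintype ι] [DecidableEq ι] {M : Matrix ι ι ℝ}

omit [DecidableEq ι] in
lemma IsIrreducible.eq_zero_of_mulVec_le (hM : M.IsIrreducible) {y : ι → ℝ} (hy : 0 ≤ y)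
    (hMy : M *ᵥ y ≤ y) {i : ι} (hi : y i = 0) : y = 0 := by
  let := toQuiver M
  refine funext fun j => ?_
  obtain ⟨p, -⟩ := hM.connected i j
  induction p with
  | nil => exact hi
  | @cons b c p e ih =>
    have hle : M b c * y c ≤ (M *ᵥ y) b :=
      Finset.single_le_sum (f := fun l => M b l * y l)
        (fun l _ => mul_nonneg (hM.nonneg b l) (hy l)) (Finset.mem_univ c)
    have hMbc : M b c * y c ≤ 0 := by simpa [ih] using hle.trans (hMy b)
    exact le_antisymm (nonpos_of_mul_nonpos_right hMbc e.down) (hy c)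

omit [DecidableEq ι] in
lemma mulVec_abs_eq_abs_of_mulVec_eq_self (hM : ∀ i j, 0 ≤ M i j) (hcol : 1 ᵥ* M = 1)
    {x : ι → ℝ} (hx : M *ᵥ x = x) : M *ᵥ |x| = |x| := by
  have hle : ∀ i, |x| i ≤ (M *ᵥ |x|) i := fun i => by
    calc |x| i = |∑ l, M i l * x l| := by rw [Pi.abs_apply, ← congrFun hx i]; rfl
      _ ≤ ∑ l, |M i l * x l| := Finset.abs_sum_le_sum_abs _ _
      _ = (M *ᵥ |x|) i := by simp [mulVec, dotProduct, abs_mul, abs_of_nonneg (hM _ _)]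
  have hsum : ∑ i, |x| i = ∑ i, (M *ᵥ |x|) i := by
    simp only [← one_dotProduct, dotProduct_mulVec, hcol]
  exact (funext ((Finset.sum_eq_sum_iff_of_le fun i _ => hle i).1 hsum · (Finset.mem_univ _))).symm

omit [DecidableEq ι] in
lemma IsIrreducible.eq_smul_of_mulVec_eq_self (hM : M.IsIrreducible) (hcol : 1 ᵥ* M = 1)
    {ν : ι → ℝ} (hν : ∀ i, 0 < ν i) (hMν : M *ᵥ ν = ν) {x : ι → ℝ} (hx : M *ᵥ x = x) (i : ι) :
    x = (x i / ν i) • ν := by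
  set z := x - (x i / ν i) • ν
  have hz : M *ᵥ z = z := by rw [mulVec_sub, mulVec_smul, hx, hMν]
  have hzi : |z| i = 0 := by
    simp [z, div_mul_cancel₀ _ (hν i).ne']
  have h := hM.eq_zero_of_mulVec_le (abs_nonneg z)
    (mulVec_abs_eq_abs_of_mulVec_eq_self hM.nonneg hcol hz).le hzi
  rwa [Pi.abs_eq_zero, sub_eq_zero] at h

lemma isUnit_one_sub_add_vecMulVec (hM : M.IsIrreducible) (hcol : 1 ᵥ* M = 1)
    {ν : ι → ℝ} (hν : ∀ i, 0 < ν i) (hMν : M *ᵥ ν = ν) :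
    IsUnit (1 - M + vecMulVec ν 1) := by
  rw [isUnit_iff_isUnit_det, isUnit_iff_ne_zero, Ne, ← exists_mulVec_eq_zero_iff]
  rintro ⟨x, hx0, hx⟩
  rcases isEmpty_or_nonempty ι with hι | ⟨⟨i⟩⟩
  · exact hx0 (Subsingleton.elim _ _)
  rw [add_mulVec, sub_mulVec, one_mulVec, vecMulVec_mulVec, op_smul_eq_smul] at hx
  have hsum : (1 ⬝ᵥ x) * (1 ⬝ᵥ ν) = 0 := by
    simpa [dotProduct_add, dotProduct_sub, dotProduct_mulVec, hcol] using congrArg (1 ⬝ᵥ ·) hx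
  have hνsum : 1 ⬝ᵥ ν ≠ 0 :=
    (Finset.sum_pos (fun j _ => by simpa using hν j) ⟨i, Finset.mem_univ i⟩).ne'
  have hx1 : 1 ⬝ᵥ x = 0 := (mul_eq_zero.1 hsum).resolve_right hνsum
  have hfix : M *ᵥ x = x := by
    rw [hx1, zero_smul, add_zero, sub_eq_zero] at hx
    exact hx.symm
  have hxν := hM.eq_smul_of_mulVec_eq_self hcol hν hMν hfix i
  rw [hxν, dotProduct_smul, smul_eq_mul, mul_eq_zero, or_iff_left hνsum] at hx1
  exact hx0 (by rw [hxν, hx1, zero_smul])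

end PerronFrobenius

end Matrix

section Aggregation

variable {N n : ℕ} {f : Fin N → Fin n} {μ : Fin N → ℝ}

lemma agg_mulVec_apply (a : Fin n) : (Agg f *ᵥ μ) a = ∑ j, if f j = a then μ j else 0 := by
  simp [mulVec, dotProduct, Agg]

lemma agg_nonneg (a : Fin n) (j : Fin N) : 0 ≤ Agg f a j := by
  unfold Agg; split_ifs <;> norm_num

lemma one_vecMul_agg : 1 ᵥ* Agg f = 1 := by
  funext j
  simp [vecMul, dotProduct, Agg]

variable (hf : Function.Surjective f) (hμ : ∀ i, 0 < μ i)
include hf hμ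

lemma agg_mulVec_pos (a : Fin n) : 0 < (Agg f *ᵥ μ) a := by
  obtain ⟨j, rfl⟩ := hf a
  rw [agg_mulVec_apply]
  exact Finset.sum_pos' (fun l _ => by split_ifs <;> simp [(hμ l).le])
    ⟨j, Finset.mem_univ j, by simpa using hμ j⟩

lemma disagg_nonneg (j : Fin N) (a : Fin n) : 0 ≤ Disagg f μ j a := by
  unfold Disagg
  split_ifs
  exacts [div_nonneg (hμ j).le (agg_mulVec_pos hf hμ a).le, le_rfl]

lemma disagg_apply_self_pos (j : Fin N) : 0 < Disagg f μ j (f j) := by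
  simpa [Disagg] using div_pos (hμ j) (agg_mulVec_pos hf hμ (f j))

lemma agg_mul_disagg : Agg f * Disagg f μ = 1 := by
  ext a b
  have hterm : ∀ j, Agg f a j * Disagg f μ j b =
      if a = b then (if f j = b then μ j else 0) / (Agg f *ᵥ μ) b else 0 := by
    intro j
    simp only [Agg, Disagg]
    split_ifs <;> simp_all
  rw [mul_apply, Finset.sum_congr rfl fun j _ => hterm j, one_apply]
  by_cases hab : a = b
  · simp only [hab, if_true]
    rw [← Finset.sum_div, ← agg_mulVec_apply, div_self (agg_mulVec_pos hf hμ b).ne']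
  · simp [hab]

lemma one_vecMul_disagg : 1 ᵥ* Disagg f μ = 1 := by
  funext b
  have hterm : ∀ j, Disagg f μ j b = (if f j = b then μ j else 0) / (Agg f *ᵥ μ) b := by
    intro j
    simp only [Disagg]
    split_ifs <;> simp
  simp only [vecMul, dotProduct, Pi.one_apply, one_mul, hterm]
  rw [← Finset.sum_div, ← agg_mulVec_apply, div_self (agg_mulVec_pos hf hμ b).ne']

lemma disagg_mulVec_agg_mulVec : Disagg f μ *ᵥ (Agg f *ᵥ μ) = μ := by
  funext j
  simp only [mulVec, dotProduct, Disagg, ite_mul, zero_mul, Finset.sum_ite_eq, Finset.mem_univ,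
    if_true]
  exact div_mul_cancel₀ _ (agg_mulVec_pos hf hμ (f j)).ne'

lemma coarseC_nonneg {P : Matrix (Fin N) (Fin N) ℝ} (hP : ∀ i j, 0 ≤ P i j) (a b : Fin n) :
    0 ≤ CoarseC P f μ a b :=
  mul_apply_nonneg (mul_apply_nonneg agg_nonneg hP) (disagg_nonneg hf hμ) a b

lemma one_vecMul_coarseC {P : Matrix (Fin N) (Fin N) ℝ} (hP : 1 ᵥ* P = 1) :
    1 ᵥ* CoarseC P f μ = 1 := by
  rw [CoarseC, ← vecMul_vecMul, ← vecMul_vecMul, one_vecMul_agg, hP, one_vecMul_disagg hf hμ]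

lemma coarseC_mulVec_agg_mulVec {P : Matrix (Fin N) (Fin N) ℝ} (hPμ : P *ᵥ μ = μ) :
    CoarseC P f μ *ᵥ (Agg f *ᵥ μ) = Agg f *ᵥ μ := by
  rw [CoarseC, ← mulVec_mulVec, ← mulVec_mulVec, disagg_mulVec_agg_mulVec hf hμ, hPμ]

lemma isIrreducible_coarseC {P : Matrix (Fin N) (Fin N) ℝ} (hP : P.IsIrreducible) :
    (CoarseC P f μ).IsIrreducible :=
  hP.of_surjective (coarseC_nonneg hf hμ hP.nonneg) hf fun i j hij =>
    mul_apply_pos_of_nonneg (mul_apply_nonneg agg_nonneg hP.nonneg) (disagg_nonneg hf hμ)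
      (mul_apply_pos_of_nonneg agg_nonneg hP.nonneg (by simp [Agg]) hij)
      (disagg_apply_self_pos hf hμ j)

lemma agg_mul_mul_disagg (P : Matrix (Fin N) (Fin N) ℝ) :
    Agg f * (1 - P + vecMulVec μ 1) * Disagg f μ =
      1 - CoarseC P f μ + vecMulVec (Agg f *ᵥ μ) 1 := by
  rw [Matrix.mul_add, Matrix.mul_sub, Matrix.mul_one, Matrix.add_mul, Matrix.sub_mul,
    agg_mul_disagg hf hμ, mul_vecMulVec, vecMulVec_mul, one_vecMul_disagg hf hμ, CoarseC]

lemma isUnit_agg_mul_mul_disagg {P : Matrix (Fin N) (Fin N) ℝ} (hP : P.IsIrreducible)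
    (hcol : 1 ᵥ* P = 1) (hPμ : P *ᵥ μ = μ) :
    IsUnit (Agg f * (1 - P + vecMulVec μ 1) * Disagg f μ) := by
  rw [agg_mul_mul_disagg hf hμ]
  exact isUnit_one_sub_add_vecMulVec (isIrreducible_coarseC hf hμ hP)
    (one_vecMul_coarseC hf hμ hcol) (agg_mulVec_pos hf hμ) (coarseC_mulVec_agg_mulVec hf hμ hPμ)

end Aggregation

lemma one_sub_hatP {N : ℕ} (P : Matrix (Fin N) (Fin N) ℝ) (μ : Fin N → ℝ) :
    1 - hatP P μ = 1 - P + vecMulVec μ 1 := by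
  rw [hatP]; abel

lemma jop_eq_errorProp {N n : ℕ} (P : Matrix (Fin N) (Fin N) ℝ) (f : Fin N → Fin n)
    (μ : Fin N → ℝ) : Jop P f μ μ = errorProp (1 - P + vecMulVec μ 1) (Agg f) (Disagg f μ) := by
  rw [Jop, errorProp, ← one_sub_hatP, sub_sub_cancel, CoarseS, coarseCorrection, one_sub_hatP]

theorem stmt17_general {N n : ℕ} (P : Matrix (Fin N) (Fin N) ℝ)
    (μ : Fin N → ℝ) (hP : ColStoch P) (hirr : Irred P)
    (hμpos : ∀ i, 0 < μ i) (hinv : P.mulVec μ = μ)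
    (f : Fin N → Fin n) (hf : Function.Surjective f)
    (hn : 1 < n) :
    specC (Jop P f μ μ) =
      ((fun α : ℂ => 1 - α⁻¹) ''
        (specC ((1 - PiProj f μ) * (1 - hatP P μ)⁻¹ * (1 - PiProj f μ)) \ {0})) ∪ {0} := by
  have hcol : 1 ᵥ* P = 1 := funext fun j => by simpa [vecMul, dotProduct] using hP.2 j
  have hPirr := isIrreducible_of_irred hP.1 hirr
  have : Nonempty (Fin n) := ⟨⟨0, by omega⟩⟩
  rw [specC, specC, jop_eq_errorProp, one_sub_hatP, PiProj,
    show (Complex.ofReal : ℝ → ℂ) = Complex.ofRealHom from rfl]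
  exact spectrum_map_errorProp Complex.ofRealHom (agg_mul_disagg hf hμpos)
    (isUnit_one_sub_add_vecMulVec hPirr hcol hμpos hinv)
    (isUnit_agg_mul_mul_disagg hf hμpos hPirr hcol hinv)

/-- exact spectrum formula:
`σ(J(μ)) = (1 - 1/(σ((I-Π)(I-P̂)⁻¹(I-Π)) \ {0})) ∪ {0}`. -/
theorem stmt17 {N n : ℕ} (P : Matrix (Fin N) (Fin N) ℝ)
    (μ : Fin N → ℝ) (hP : ColStoch P) (hirr : Irred P) (hirr2 : Irred (Pᵀ * P))
    (hμpos : ∀ i, 0 < μ i) (hμsum : ∑ i, μ i = 1) (hinv : P.mulVec μ = μ)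
    (f : Fin N → Fin n) (hf : Function.Surjective f)
    (hn : 1 < n) (hcoarse : ∃ a b : Fin N, a ≠ b ∧ f a = f b) :
    specC (Jop P f μ μ) =
      ((fun α : ℂ => 1 - α⁻¹) ''
        (specC ((1 - PiProj f μ) * (1 - hatP P μ)⁻¹ * (1 - PiProj f μ)) \ {0})) ∪ {0} :=
  stmt17_general P μ hP hirr hμpos hinv f hf hn
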